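/- arXiv:1409.6859 — 4 statements merged into one kernel-verified Lean document; each statement's English description precedes it below -/
import Mathlib

section
/- If f(x,y,z,t) is a positive smooth function satisfying the bilinear equation (D_y D_t − D_x^3 D_y + 3 D_x D_z) f·f = 0, then u = 2(ln f)_x solves the (3+1)-dimensional generalized BKP equation u_{ty} − u_{xxxy} − 3(u_x u_y)_x + 3u_{xz} = 0. -/
open Complex

/-- `(∂_x - ∂_{x'})` acting on a function of `(x,y,z,t,x',y',z',t')`. -/
noncomputable def Dx (F : ℝ → ℝ → ℝ → ℝ → ℝ → ℝ → ℝ → ℝ → ℝ) :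
    ℝ → ℝ → ℝ → ℝ → ℝ → ℝ → ℝ → ℝ → ℝ :=
  fun x y z t x' y' z' t' =>
    deriv (fun s => F s y z t x' y' z' t') x - deriv (fun s => F x y z t s y' z' t') x'

/-- `(∂_y - ∂_{y'})`. -/
noncomputable def Dy (F : ℝ → ℝ → ℝ → ℝ → ℝ → ℝ → ℝ → ℝ → ℝ) :
    ℝ → ℝ → ℝ → ℝ → ℝ → ℝ → ℝ → ℝ → ℝ :=
  fun x y z t x' y' z' t' =>
    deriv (fun s => F x s z t x' y' z' t') y - deriv (fun s => F x y z t x' s z' t') y'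

/-- `(∂_z - ∂_{z'})`. -/
noncomputable def Dz (F : ℝ → ℝ → ℝ → ℝ → ℝ → ℝ → ℝ → ℝ → ℝ) :
    ℝ → ℝ → ℝ → ℝ → ℝ → ℝ → ℝ → ℝ → ℝ :=
  fun x y z t x' y' z' t' =>
    deriv (fun s => F x y s t x' y' z' t') z - deriv (fun s => F x y z t x' y' s t') z'

/-- `(∂_t - ∂_{t'})`. -/
noncomputable def Dt (F : ℝ → ℝ → ℝ → ℝ → ℝ → ℝ → ℝ → ℝ → ℝ) :
    ℝ → ℝ → ℝ → ℝ → ℝ → ℝ → ℝ → ℝ → ℝ :=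
  fun x y z t x' y' z' t' =>
    deriv (fun s => F x y z s x' y' z' t') t - deriv (fun s => F x y z t x' y' z' s) t'

/-- The Hirota bilinear operator `D_x^m D_y^n D_z^p D_t^k f·g` evaluated at `(x,y,z,t)`. -/
noncomputable def hirota (m n p k : ℕ) (f g : ℝ → ℝ → ℝ → ℝ → ℝ) (x y z t : ℝ) : ℝ :=
  (Dx^[m] (Dy^[n] (Dz^[p] (Dt^[k]
    (fun x y z t x' y' z' t' => f x y z t * g x' y' z' t'))))) x y z t x y z t

/-- Partial derivative in the first variable. -/
noncomputable def px (u : ℝ → ℝ → ℝ → ℝ → ℝ) : ℝ → ℝ → ℝ → ℝ → ℝ :=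
  fun x y z t => deriv (fun s => u s y z t) x

/-- Partial derivative in the second variable. -/
noncomputable def py (u : ℝ → ℝ → ℝ → ℝ → ℝ) : ℝ → ℝ → ℝ → ℝ → ℝ :=
  fun x y z t => deriv (fun s => u x s z t) y

/-- Partial derivative in the third variable. -/
noncomputable def pz (u : ℝ → ℝ → ℝ → ℝ → ℝ) : ℝ → ℝ → ℝ → ℝ → ℝ :=
  fun x y z t => deriv (fun s => u x y s t) z

/-- Partial derivative in the fourth variable. -/
noncomputable def pt (u : ℝ → ℝ → ℝ → ℝ → ℝ) : ℝ → ℝ → ℝ → ℝ → ℝ :=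
  fun x y z t => deriv (fun s => u x y z s) t

namespace BKP

abbrev F4 := ℝ → ℝ → ℝ → ℝ → ℝ
abbrev E4 := ℝ × ℝ × ℝ × ℝ

def unc (g : F4) : E4 → ℝ := fun p => g p.1 p.2.1 p.2.2.1 p.2.2.2

def Nice (g : F4) : Prop := ContDiff ℝ (⊤ : ℕ∞) (unc g)

def e1 : E4 := (1,0,0,0)
def e2 : E4 := (0,1,0,0)
def e3 : E4 := (0,0,1,0)
def e4 : E4 := (0,0,0,1)

variable {g h : F4} {x y z t : ℝ}

lemma curveX (x y z t : ℝ) : HasDerivAt (fun s : ℝ => ((s,y,z,t) : E4)) e1 x :=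
  HasDerivAt.prodMk (hasDerivAt_id x) (hasDerivAt_const _ _)
lemma curveY (x y z t : ℝ) : HasDerivAt (fun s : ℝ => ((x,s,z,t) : E4)) e2 y :=
  HasDerivAt.prodMk (hasDerivAt_const _ _) (HasDerivAt.prodMk (hasDerivAt_id _) (hasDerivAt_const _ _))
lemma curveZ (x y z t : ℝ) : HasDerivAt (fun s : ℝ => ((x,y,s,t) : E4)) e3 z :=
  HasDerivAt.prodMk (hasDerivAt_const _ _) (HasDerivAt.prodMk (hasDerivAt_const _ _) (HasDerivAt.prodMk (hasDerivAt_id _) (hasDerivAt_const _ _)))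
lemma curveT (x y z t : ℝ) : HasDerivAt (fun s : ℝ => ((x,y,z,s) : E4)) e4 t :=
  HasDerivAt.prodMk (hasDerivAt_const _ _) (HasDerivAt.prodMk (hasDerivAt_const _ _) (HasDerivAt.prodMk (hasDerivAt_const _ _) (hasDerivAt_id _)))

lemma Nice.hasX (hg : Nice g) : HasDerivAt (fun s => g s y z t) (fderiv ℝ (unc g) (x,y,z,t) e1) x :=
  (((hg.differentiable (by simp)) (x,y,z,t)).hasFDerivAt.comp_hasDerivAt x (curveX x y z t) :)
lemma Nice.hasY (hg : Nice g) : HasDerivAt (fun s => g x s z t) (fderiv ℝ (unc g) (x,y,z,t) e2) y :=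
  (((hg.differentiable (by simp)) (x,y,z,t)).hasFDerivAt.comp_hasDerivAt y (curveY x y z t) :)
lemma Nice.hasZ (hg : Nice g) : HasDerivAt (fun s => g x y s t) (fderiv ℝ (unc g) (x,y,z,t) e3) z :=
  (((hg.differentiable (by simp)) (x,y,z,t)).hasFDerivAt.comp_hasDerivAt z (curveZ x y z t) :)
lemma Nice.hasT (hg : Nice g) : HasDerivAt (fun s => g x y z s) (fderiv ℝ (unc g) (x,y,z,t) e4) t :=
  (((hg.differentiable (by simp)) (x,y,z,t)).hasFDerivAt.comp_hasDerivAt t (curveT x y z t) :)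

lemma Nice.px_eq (hg : Nice g) : px g x y z t = fderiv ℝ (unc g) (x,y,z,t) e1 := hg.hasX.deriv
lemma Nice.py_eq (hg : Nice g) : py g x y z t = fderiv ℝ (unc g) (x,y,z,t) e2 := hg.hasY.deriv
lemma Nice.pz_eq (hg : Nice g) : pz g x y z t = fderiv ℝ (unc g) (x,y,z,t) e3 := hg.hasZ.deriv
lemma Nice.pt_eq (hg : Nice g) : pt g x y z t = fderiv ℝ (unc g) (x,y,z,t) e4 := hg.hasT.deriv

lemma Nice.hdX (hg : Nice g) : HasDerivAt (fun s => g s y z t) (px g x y z t) x := by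
  rw [hg.px_eq]; exact hg.hasX
lemma Nice.hdY (hg : Nice g) : HasDerivAt (fun s => g x s z t) (py g x y z t) y := by
  rw [hg.py_eq]; exact hg.hasY
lemma Nice.hdZ (hg : Nice g) : HasDerivAt (fun s => g x y s t) (pz g x y z t) z := by
  rw [hg.pz_eq]; exact hg.hasZ
lemma Nice.hdT (hg : Nice g) : HasDerivAt (fun s => g x y z s) (pt g x y z t) t := by
  rw [hg.pt_eq]; exact hg.hasT

/-- uncurried form of a partial derivative -/
lemma unc_px (hg : Nice g) : unc (px g) = fun p => fderiv ℝ (unc g) p e1 := by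
  funext p; obtain ⟨x, y, z, t⟩ := p; exact hg.px_eq
lemma unc_py (hg : Nice g) : unc (py g) = fun p => fderiv ℝ (unc g) p e2 := by
  funext p; obtain ⟨x, y, z, t⟩ := p; exact hg.py_eq
lemma unc_pz (hg : Nice g) : unc (pz g) = fun p => fderiv ℝ (unc g) p e3 := by
  funext p; obtain ⟨x, y, z, t⟩ := p; exact hg.pz_eq
lemma unc_pt (hg : Nice g) : unc (pt g) = fun p => fderiv ℝ (unc g) p e4 := by
  funext p; obtain ⟨x, y, z, t⟩ := p; exact hg.pt_eq

lemma contDiff_fderiv_apply (hg : Nice g) (v : E4) :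
    ContDiff ℝ (⊤ : ℕ∞) (fun p => fderiv ℝ (unc g) p v) :=
  (hg.fderiv_right (by simp)).clm_apply contDiff_const

lemma Nice.px (hg : Nice g) : Nice (px g) := by rw [Nice, unc_px hg]; exact contDiff_fderiv_apply hg e1
lemma Nice.py (hg : Nice g) : Nice (py g) := by rw [Nice, unc_py hg]; exact contDiff_fderiv_apply hg e2
lemma Nice.pz (hg : Nice g) : Nice (pz g) := by rw [Nice, unc_pz hg]; exact contDiff_fderiv_apply hg e3
lemma Nice.pt (hg : Nice g) : Nice (pt g) := by rw [Nice, unc_pt hg]; exact contDiff_fderiv_apply hg e4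

/-- symmetry of second derivatives -/
lemma fderiv_comm (hg : Nice g) (v w : E4) (p : E4) :
    fderiv ℝ (fun q => fderiv ℝ (unc g) q v) p w
      = fderiv ℝ (fun q => fderiv ℝ (unc g) q w) p v := by
  have hd : Differentiable ℝ (unc g) := hg.differentiable (by simp)
  have hd' : Differentiable ℝ (fderiv ℝ (unc g)) :=
    (hg.fderiv_right (m := (⊤ : ℕ∞)) (by simp)).differentiable (by simp)
  have key : ∀ v : E4, fderiv ℝ (fun q => fderiv ℝ (unc g) q v) p
      = (fderiv ℝ (fderiv ℝ (unc g)) p).flip v := by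
    intro v
    rw [fderiv_clm_apply (hd' p) (differentiableAt_const v), fderiv_const_apply]
    simp
  rw [key v, key w]
  simp only [ContinuousLinearMap.flip_apply]
  exact second_derivative_symmetric (fun q => (hd q).hasFDerivAt) (hd' p).hasFDerivAt w v

lemma comm_xy (hg : Nice g) : px (py g) = py (px g) := by
  funext x y z t
  rw [(hg.py).px_eq, (hg.px).py_eq, unc_py hg, unc_px hg, fderiv_comm hg e2 e1]
lemma comm_xz (hg : Nice g) : px (pz g) = pz (px g) := by
  funext x y z t
  rw [(hg.pz).px_eq, (hg.px).pz_eq, unc_pz hg, unc_px hg, fderiv_comm hg e3 e1]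
lemma comm_xt (hg : Nice g) : px (pt g) = pt (px g) := by
  funext x y z t
  rw [(hg.pt).px_eq, (hg.px).pt_eq, unc_pt hg, unc_px hg, fderiv_comm hg e4 e1]

/-- closure properties -/
lemma Nice.mul (hg : Nice g) (hh : Nice h) :
    Nice (fun x y z t => g x y z t * h x y z t) := ContDiff.mul hg hh
lemma Nice.add (hg : Nice g) (hh : Nice h) :
    Nice (fun x y z t => g x y z t + h x y z t) := ContDiff.add hg hh
lemma Nice.sub (hg : Nice g) (hh : Nice h) :
    Nice (fun x y z t => g x y z t - h x y z t) := ContDiff.sub hg hh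
lemma Nice.div (hg : Nice g) (hh : Nice h) (hne : ∀ x y z t, h x y z t ≠ 0) :
    Nice (fun x y z t => g x y z t / h x y z t) :=
  ContDiff.div hg hh (fun p => hne p.1 p.2.1 p.2.2.1 p.2.2.2)
lemma Nice.const_mul (c : ℝ) (hg : Nice g) :
    Nice (fun x y z t => c * g x y z t) := contDiff_const.mul hg
lemma nice_const (c : ℝ) : Nice (fun _ _ _ _ => c) := contDiff_const


/-! ### tensor-sum machinery -/

abbrev TL := List (ℝ × F4 × F4)

def interp (l : TL) : ℝ → ℝ → ℝ → ℝ → ℝ → ℝ → ℝ → ℝ → ℝ :=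
  fun x y z t x' y' z' t' =>
    (l.map fun p => p.1 * (p.2.1 x y z t * p.2.2 x' y' z' t')).sum

def NiceL (l : TL) : Prop := ∀ p ∈ l, Nice p.2.1 ∧ Nice p.2.2

noncomputable def stepx (p : ℝ × F4 × F4) : TL := [(p.1, px p.2.1, p.2.2), (-p.1, p.2.1, px p.2.2)]
noncomputable def stepy (p : ℝ × F4 × F4) : TL := [(p.1, py p.2.1, p.2.2), (-p.1, p.2.1, py p.2.2)]
noncomputable def stepz (p : ℝ × F4 × F4) : TL := [(p.1, pz p.2.1, p.2.2), (-p.1, p.2.1, pz p.2.2)]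
noncomputable def stept (p : ℝ × F4 × F4) : TL := [(p.1, pt p.2.1, p.2.2), (-p.1, p.2.1, pt p.2.2)]

lemma NiceL.bindx (hl : NiceL l) : NiceL (l.flatMap stepx) := by
  intro p hp
  simp only [List.mem_flatMap] at hp
  obtain ⟨q, hq, hpq⟩ := hp
  obtain ⟨h1, h2⟩ := hl q hq
  simp only [stepx, List.mem_cons, List.mem_singleton] at hpq
  rcases hpq with rfl | rfl | h
  · exact ⟨h1.px, h2⟩
  · exact ⟨h1, h2.px⟩
  · simp at h
lemma NiceL.bindy (hl : NiceL l) : NiceL (l.flatMap stepy) := by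
  intro p hp
  simp only [List.mem_flatMap] at hp
  obtain ⟨q, hq, hpq⟩ := hp
  obtain ⟨h1, h2⟩ := hl q hq
  simp only [stepy, List.mem_cons, List.mem_singleton] at hpq
  rcases hpq with rfl | rfl | h
  · exact ⟨h1.py, h2⟩
  · exact ⟨h1, h2.py⟩
  · simp at h
lemma NiceL.bindz (hl : NiceL l) : NiceL (l.flatMap stepz) := by
  intro p hp
  simp only [List.mem_flatMap] at hp
  obtain ⟨q, hq, hpq⟩ := hp
  obtain ⟨h1, h2⟩ := hl q hq
  simp only [stepz, List.mem_cons, List.mem_singleton] at hpq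
  rcases hpq with rfl | rfl | h
  · exact ⟨h1.pz, h2⟩
  · exact ⟨h1, h2.pz⟩
  · simp at h
lemma NiceL.bindt (hl : NiceL l) : NiceL (l.flatMap stept) := by
  intro p hp
  simp only [List.mem_flatMap] at hp
  obtain ⟨q, hq, hpq⟩ := hp
  obtain ⟨h1, h2⟩ := hl q hq
  simp only [stept, List.mem_cons, List.mem_singleton] at hpq
  rcases hpq with rfl | rfl | h
  · exact ⟨h1.pt, h2⟩
  · exact ⟨h1, h2.pt⟩
  · simp at h

/-- derivative of the left slice of an interp -/
lemma interp_hdX (hl : NiceL l) (x y z t x' y' z' t' : ℝ) :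
    HasDerivAt (fun s => interp l s y z t x' y' z' t')
      ((l.map fun p => p.1 * (px p.2.1 x y z t * p.2.2 x' y' z' t')).sum) x := by
  induction l with
  | nil => simpa [interp] using hasDerivAt_const x (0:ℝ)
  | cons q l ih =>
    have hq := hl q List.mem_cons_self
    have hrest := ih (fun p hp => hl p (List.mem_cons_of_mem q hp))
    have hterm : HasDerivAt (fun s => q.1 * (q.2.1 s y z t * q.2.2 x' y' z' t'))
        (q.1 * (px q.2.1 x y z t * q.2.2 x' y' z' t')) x :=
      ((hq.1.hdX.mul_const _).const_mul _)
    simpa [interp, List.map_cons, List.sum_cons] using hterm.fun_add hrest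

lemma interp_hdX' (hl : NiceL l) (x y z t x' y' z' t' : ℝ) :
    HasDerivAt (fun s => interp l x y z t s y' z' t')
      ((l.map fun p => p.1 * (p.2.1 x y z t * px p.2.2 x' y' z' t')).sum) x' := by
  induction l with
  | nil => simpa [interp] using hasDerivAt_const x' (0:ℝ)
  | cons q l ih =>
    have hq := hl q List.mem_cons_self
    have hrest := ih (fun p hp => hl p (List.mem_cons_of_mem q hp))
    have hterm : HasDerivAt (fun s => q.1 * (q.2.1 x y z t * q.2.2 s y' z' t'))
        (q.1 * (q.2.1 x y z t * px q.2.2 x' y' z' t')) x' :=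
      ((hq.2.hdX.const_mul _).const_mul _)
    simpa [interp, List.map_cons, List.sum_cons] using hterm.fun_add hrest

lemma interp_flatMap_stepx (l : TL) (x y z t x' y' z' t' : ℝ) :
    interp (l.flatMap stepx) x y z t x' y' z' t'
      = (l.map fun p => p.1 * (px p.2.1 x y z t * p.2.2 x' y' z' t')).sum
        - (l.map fun p => p.1 * (p.2.1 x y z t * px p.2.2 x' y' z' t')).sum := by
  induction l with
  | nil => simp [interp]
  | cons q l ih =>
    simp only [List.flatMap_cons, interp, List.map_append, List.sum_append, List.map_cons,
      List.sum_cons, stepx, List.map_nil, List.sum_nil] at *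
    rw [ih]; ring

lemma Dx_interp (hl : NiceL l) : Dx (interp l) = interp (l.flatMap stepx) := by
  funext x y z t x' y' z' t'
  rw [Dx, (interp_hdX hl x y z t x' y' z' t').deriv, (interp_hdX' hl x y z t x' y' z' t').deriv,
    interp_flatMap_stepx]

lemma interp_hdY (hl : NiceL l) (x y z t x' y' z' t' : ℝ) :
    HasDerivAt (fun s => interp l x s z t x' y' z' t')
      ((l.map fun p => p.1 * (py p.2.1 x y z t * p.2.2 x' y' z' t')).sum) y := by
  induction l with
  | nil => simpa [interp] using hasDerivAt_const y (0:ℝ)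
  | cons q l ih =>
    have hq := hl q List.mem_cons_self
    have hrest := ih (fun p hp => hl p (List.mem_cons_of_mem q hp))
    have hterm : HasDerivAt (fun s => q.1 * (q.2.1 x s z t * q.2.2 x' y' z' t'))
        (q.1 * (py q.2.1 x y z t * q.2.2 x' y' z' t')) y :=
      ((hq.1.hdY.mul_const _).const_mul _)
    simpa [interp, List.map_cons, List.sum_cons] using hterm.fun_add hrest

lemma interp_hdY' (hl : NiceL l) (x y z t x' y' z' t' : ℝ) :
    HasDerivAt (fun s => interp l x y z t x' s z' t')
      ((l.map fun p => p.1 * (p.2.1 x y z t * py p.2.2 x' y' z' t')).sum) y' := by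
  induction l with
  | nil => simpa [interp] using hasDerivAt_const y' (0:ℝ)
  | cons q l ih =>
    have hq := hl q List.mem_cons_self
    have hrest := ih (fun p hp => hl p (List.mem_cons_of_mem q hp))
    have hterm : HasDerivAt (fun s => q.1 * (q.2.1 x y z t * q.2.2 x' s z' t'))
        (q.1 * (q.2.1 x y z t * py q.2.2 x' y' z' t')) y' :=
      ((hq.2.hdY.const_mul _).const_mul _)
    simpa [interp, List.map_cons, List.sum_cons] using hterm.fun_add hrest

lemma interp_flatMap_stepy (l : TL) (x y z t x' y' z' t' : ℝ) :
    interp (l.flatMap stepy) x y z t x' y' z' t'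
      = (l.map fun p => p.1 * (py p.2.1 x y z t * p.2.2 x' y' z' t')).sum
        - (l.map fun p => p.1 * (p.2.1 x y z t * py p.2.2 x' y' z' t')).sum := by
  induction l with
  | nil => simp [interp]
  | cons q l ih =>
    simp only [List.flatMap_cons, interp, List.map_append, List.sum_append, List.map_cons,
      List.sum_cons, stepy, List.map_nil, List.sum_nil] at *
    rw [ih]; ring

lemma Dy_interp (hl : NiceL l) : Dy (interp l) = interp (l.flatMap stepy) := by
  funext x y z t x' y' z' t'
  rw [Dy, (interp_hdY hl x y z t x' y' z' t').deriv, (interp_hdY' hl x y z t x' y' z' t').deriv,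
    interp_flatMap_stepy]

lemma interp_hdZ (hl : NiceL l) (x y z t x' y' z' t' : ℝ) :
    HasDerivAt (fun s => interp l x y s t x' y' z' t')
      ((l.map fun p => p.1 * (pz p.2.1 x y z t * p.2.2 x' y' z' t')).sum) z := by
  induction l with
  | nil => simpa [interp] using hasDerivAt_const z (0:ℝ)
  | cons q l ih =>
    have hq := hl q List.mem_cons_self
    have hrest := ih (fun p hp => hl p (List.mem_cons_of_mem q hp))
    have hterm : HasDerivAt (fun s => q.1 * (q.2.1 x y s t * q.2.2 x' y' z' t'))
        (q.1 * (pz q.2.1 x y z t * q.2.2 x' y' z' t')) z :=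
      ((hq.1.hdZ.mul_const _).const_mul _)
    simpa [interp, List.map_cons, List.sum_cons] using hterm.fun_add hrest

lemma interp_hdZ' (hl : NiceL l) (x y z t x' y' z' t' : ℝ) :
    HasDerivAt (fun s => interp l x y z t x' y' s t')
      ((l.map fun p => p.1 * (p.2.1 x y z t * pz p.2.2 x' y' z' t')).sum) z' := by
  induction l with
  | nil => simpa [interp] using hasDerivAt_const z' (0:ℝ)
  | cons q l ih =>
    have hq := hl q List.mem_cons_self
    have hrest := ih (fun p hp => hl p (List.mem_cons_of_mem q hp))
    have hterm : HasDerivAt (fun s => q.1 * (q.2.1 x y z t * q.2.2 x' y' s t'))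
        (q.1 * (q.2.1 x y z t * pz q.2.2 x' y' z' t')) z' :=
      ((hq.2.hdZ.const_mul _).const_mul _)
    simpa [interp, List.map_cons, List.sum_cons] using hterm.fun_add hrest

lemma interp_flatMap_stepz (l : TL) (x y z t x' y' z' t' : ℝ) :
    interp (l.flatMap stepz) x y z t x' y' z' t'
      = (l.map fun p => p.1 * (pz p.2.1 x y z t * p.2.2 x' y' z' t')).sum
        - (l.map fun p => p.1 * (p.2.1 x y z t * pz p.2.2 x' y' z' t')).sum := by
  induction l with
  | nil => simp [interp]
  | cons q l ih =>
    simp only [List.flatMap_cons, interp, List.map_append, List.sum_append, List.map_cons,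
      List.sum_cons, stepz, List.map_nil, List.sum_nil] at *
    rw [ih]; ring

lemma Dz_interp (hl : NiceL l) : Dz (interp l) = interp (l.flatMap stepz) := by
  funext x y z t x' y' z' t'
  rw [Dz, (interp_hdZ hl x y z t x' y' z' t').deriv, (interp_hdZ' hl x y z t x' y' z' t').deriv,
    interp_flatMap_stepz]

lemma interp_hdT (hl : NiceL l) (x y z t x' y' z' t' : ℝ) :
    HasDerivAt (fun s => interp l x y z s x' y' z' t')
      ((l.map fun p => p.1 * (pt p.2.1 x y z t * p.2.2 x' y' z' t')).sum) t := by
  induction l with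
  | nil => simpa [interp] using hasDerivAt_const t (0:ℝ)
  | cons q l ih =>
    have hq := hl q List.mem_cons_self
    have hrest := ih (fun p hp => hl p (List.mem_cons_of_mem q hp))
    have hterm : HasDerivAt (fun s => q.1 * (q.2.1 x y z s * q.2.2 x' y' z' t'))
        (q.1 * (pt q.2.1 x y z t * q.2.2 x' y' z' t')) t :=
      ((hq.1.hdT.mul_const _).const_mul _)
    simpa [interp, List.map_cons, List.sum_cons] using hterm.fun_add hrest

lemma interp_hdT' (hl : NiceL l) (x y z t x' y' z' t' : ℝ) :
    HasDerivAt (fun s => interp l x y z t x' y' z' s)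
      ((l.map fun p => p.1 * (p.2.1 x y z t * pt p.2.2 x' y' z' t')).sum) t' := by
  induction l with
  | nil => simpa [interp] using hasDerivAt_const t' (0:ℝ)
  | cons q l ih =>
    have hq := hl q List.mem_cons_self
    have hrest := ih (fun p hp => hl p (List.mem_cons_of_mem q hp))
    have hterm : HasDerivAt (fun s => q.1 * (q.2.1 x y z t * q.2.2 x' y' z' s))
        (q.1 * (q.2.1 x y z t * pt q.2.2 x' y' z' t')) t' :=
      ((hq.2.hdT.const_mul _).const_mul _)
    simpa [interp, List.map_cons, List.sum_cons] using hterm.fun_add hrest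

lemma interp_flatMap_stept (l : TL) (x y z t x' y' z' t' : ℝ) :
    interp (l.flatMap stept) x y z t x' y' z' t'
      = (l.map fun p => p.1 * (pt p.2.1 x y z t * p.2.2 x' y' z' t')).sum
        - (l.map fun p => p.1 * (p.2.1 x y z t * pt p.2.2 x' y' z' t')).sum := by
  induction l with
  | nil => simp [interp]
  | cons q l ih =>
    simp only [List.flatMap_cons, interp, List.map_append, List.sum_append, List.map_cons,
      List.sum_cons, stept, List.map_nil, List.sum_nil] at *
    rw [ih]; ring

lemma Dt_interp (hl : NiceL l) : Dt (interp l) = interp (l.flatMap stept) := by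
  funext x y z t x' y' z' t'
  rw [Dt, (interp_hdT hl x y z t x' y' z' t').deriv, (interp_hdT' hl x y z t x' y' z' t').deriv,
    interp_flatMap_stept]

lemma base_interp (f : F4) :
    (fun x y z t x' y' z' t' => f x y z t * f x' y' z' t') = interp [(1, f, f)] := by
  funext x y z t x' y' z' t'; simp [interp]

lemma baseL (hf : Nice f) : NiceL [((1:ℝ), f, f)] := by
  rintro p hp
  simp only [List.mem_singleton] at hp
  subst hp; exact ⟨hf, hf⟩

lemma hir1 (hf : Nice f) (x y z t : ℝ) :
    hirota 0 1 0 1 f f x y z t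
      = 2 * (py (pt f) x y z t * f x y z t - py f x y z t * pt f x y z t) := by
  show (Dx^[0] (Dy^[1] (Dz^[0] (Dt^[1] _)))) x y z t x y z t = _
  simp only [Function.iterate_one, Function.iterate_zero, id_eq]
  rw [base_interp f, Dt_interp (baseL hf), Dy_interp ((baseL hf).bindt)]
  simp [interp, stept, stepy]
  ring

lemma hir3 (hf : Nice f) (x y z t : ℝ) :
    hirota 1 0 1 0 f f x y z t
      = 2 * (px (pz f) x y z t * f x y z t - px f x y z t * pz f x y z t) := by
  show (Dx^[1] (Dy^[0] (Dz^[1] (Dt^[0] _)))) x y z t x y z t = _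
  simp only [Function.iterate_one, Function.iterate_zero, id_eq]
  rw [base_interp f, Dz_interp (baseL hf), Dx_interp ((baseL hf).bindz)]
  simp [interp, stepz, stepx]
  ring

lemma hir2 (hf : Nice f) (x y z t : ℝ) :
    hirota 3 1 0 0 f f x y z t
      = 2 * (px (px (px (py f))) x y z t * f x y z t
          - px (px (px f)) x y z t * py f x y z t
          - 3 * (px (px (py f)) x y z t * px f x y z t)
          + 3 * (px (px f) x y z t * px (py f) x y z t)) := by
  show (Dx^[3] (Dy^[1] (Dz^[0] (Dt^[0] _)))) x y z t x y z t = _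
  have h3 : Dx^[3] = fun F => Dx (Dx (Dx F)) := by
    funext F; rfl
  simp only [Function.iterate_one, Function.iterate_zero, id_eq, h3]
  rw [base_interp f, Dy_interp (baseL hf), Dx_interp ((baseL hf).bindy),
    Dx_interp ((baseL hf).bindy.bindx), Dx_interp ((baseL hf).bindy.bindx.bindx)]
  simp [interp, stepy, stepx]
  ring

section GoalSide
variable {f : F4} (hf : Nice f) (hne : ∀ x y z t, f x y z t ≠ 0)
include hf hne

/-- t-derivative of `2 log f` -/
lemma ptLam : pt (fun x y z t => 2 * Real.log (f x y z t))
    = fun x y z t => 2 * (pt f x y z t / f x y z t) := by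
  funext x y z t
  exact ((HasDerivAt.log hf.hdT (hne x y z t)).const_mul 2).deriv

lemma pyptLam : py (pt (fun x y z t => 2 * Real.log (f x y z t)))
    = fun x y z t => 2 * ((py (pt f) x y z t * f x y z t - pt f x y z t * py f x y z t)
        / (f x y z t) ^ 2) := by
  rw [ptLam hf hne]
  funext x y z t
  exact (((hf.pt.hdY.div hf.hdY (hne x y z t)).const_mul 2)).deriv


/-- `u = 2 (log f)_x` equals `2 f_x / f` -/
lemma uFormula : (fun x y z t => 2 * deriv (fun s => Real.log (f s y z t)) x)
    = fun x y z t => 2 * (px f x y z t / f x y z t) := by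
  funext x y z t
  rw [(HasDerivAt.log hf.hdX (hne x y z t)).deriv]

/-- `u = px Λ` -/
lemma uIsPxLam : (fun x y z t => 2 * (px f x y z t / f x y z t))
    = px (fun x y z t => 2 * Real.log (f x y z t)) := by
  funext x y z t
  exact (((HasDerivAt.log hf.hdX (hne x y z t)).const_mul 2).deriv).symm

lemma pxU : px (fun x y z t => 2 * (px f x y z t / f x y z t))
    = fun x y z t => 2 * ((px (px f) x y z t * f x y z t - px f x y z t * px f x y z t)
        / (f x y z t) ^ 2) := by
  funext x y z t
  exact ((hf.px.hdX.div hf.hdX (hne x y z t)).const_mul 2).deriv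

lemma pyU : py (fun x y z t => 2 * (px f x y z t / f x y z t))
    = fun x y z t => 2 * ((px (py f) x y z t * f x y z t - px f x y z t * py f x y z t)
        / (f x y z t) ^ 2) := by
  rw [comm_xy hf]
  funext x y z t
  exact ((hf.px.hdY.div hf.hdY (hne x y z t)).const_mul 2).deriv

lemma pzU : pz (fun x y z t => 2 * (px f x y z t / f x y z t))
    = fun x y z t => 2 * ((px (pz f) x y z t * f x y z t - px f x y z t * pz f x y z t)
        / (f x y z t) ^ 2) := by
  rw [comm_xz hf]
  funext x y z t
  exact ((hf.px.hdZ.div hf.hdZ (hne x y z t)).const_mul 2).deriv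

lemma pxpxU : px (px (fun x y z t => 2 * (px f x y z t / f x y z t)))
    = fun x y z t => 2 * (px (px (px f)) x y z t / f x y z t)
      - 6 * (px f x y z t * px (px f) x y z t / (f x y z t) ^ 2)
      + 4 * ((px f x y z t) ^ 3 / (f x y z t) ^ 3) := by
  rw [pxU hf hne]
  funext x y z t
  have hnum : HasDerivAt
      (fun s => px (px f) s y z t * f s y z t - px f s y z t * px f s y z t)
      (px (px (px f)) x y z t * f x y z t + px (px f) x y z t * px f x y z t
        - (px (px f) x y z t * px f x y z t + px f x y z t * px (px f) x y z t)) x :=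
    (hf.px.px.hdX.mul hf.hdX).sub (hf.px.hdX.mul hf.px.hdX)
  have hden : HasDerivAt (fun s => (f s y z t) ^ 2)
      (2 * (f x y z t) ^ 1 * px f x y z t) x := by
    simpa using hf.hdX.fun_pow 2
  have h := ((hnum.fun_div hden (pow_ne_zero 2 (hne x y z t))).const_mul 2).deriv
  show deriv (fun s => 2 * ((px (px f) s y z t * f s y z t - px f s y z t * px f s y z t)
      / f s y z t ^ 2)) x = _
  rw [h]
  have := hne x y z t
  field_simp
  ring

lemma pypxpxU : py (px (px (fun x y z t => 2 * (px f x y z t / f x y z t))))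
    = fun x y z t => 2 * (px (px (px (py f))) x y z t / f x y z t)
      - 2 * (px (px (px f)) x y z t * py f x y z t / (f x y z t) ^ 2)
      - 6 * (px (py f) x y z t * px (px f) x y z t / (f x y z t) ^ 2)
      - 6 * (px f x y z t * px (px (py f)) x y z t / (f x y z t) ^ 2)
      + 12 * (px f x y z t * px (px f) x y z t * py f x y z t / (f x y z t) ^ 3)
      + 12 * ((px f x y z t) ^ 2 * px (py f) x y z t / (f x y z t) ^ 3)
      - 12 * ((px f x y z t) ^ 3 * py f x y z t / (f x y z t) ^ 4) := by
  rw [pxpxU hf hne]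
  funext x y z t
  have c1 : py (px f) = px (py f) := (comm_xy hf).symm
  have c2 : py (px (px f)) = px (px (py f)) := by
    rw [← comm_xy hf.px, ← comm_xy hf]
  have c3 : py (px (px (px f))) = px (px (px (py f))) := by
    rw [← comm_xy hf.px.px, ← comm_xy hf.px, ← comm_xy hf]
  have h1 : HasDerivAt (fun s => 2 * (px (px (px f)) x s z t / f x s z t))
      (2 * ((py (px (px (px f))) x y z t * f x y z t
        - px (px (px f)) x y z t * py f x y z t) / (f x y z t) ^ 2)) y :=
    (hf.px.px.px.hdY.div hf.hdY (hne x y z t)).const_mul 2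
  have h2 : HasDerivAt (fun s => 6 * (px f x s z t * px (px f) x s z t / (f x s z t) ^ 2))
      (6 * (((py (px f) x y z t * px (px f) x y z t
          + px f x y z t * py (px (px f)) x y z t) * (f x y z t) ^ 2
        - px f x y z t * px (px f) x y z t * (2 * (f x y z t) ^ 1 * py f x y z t))
          / ((f x y z t) ^ 2) ^ 2)) y := by
    have hden : HasDerivAt (fun s => (f x s z t) ^ 2)
        (2 * (f x y z t) ^ 1 * py f x y z t) y := hf.hdY.pow 2
    exact (((hf.px.hdY.mul hf.px.px.hdY).div hden (pow_ne_zero 2 (hne x y z t))).const_mul 6)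
  have h3 : HasDerivAt (fun s => 4 * ((px f x s z t) ^ 3 / (f x s z t) ^ 3))
      (4 * ((3 * (px f x y z t) ^ 2 * py (px f) x y z t * (f x y z t) ^ 3
        - (px f x y z t) ^ 3 * (3 * (f x y z t) ^ 2 * py f x y z t))
          / ((f x y z t) ^ 3) ^ 2)) y := by
    have hn : HasDerivAt (fun s => (px f x s z t) ^ 3)
        (3 * (px f x y z t) ^ 2 * py (px f) x y z t) y := by
      simpa using hf.px.hdY.fun_pow 3
    have hd : HasDerivAt (fun s => (f x s z t) ^ 3)
        (3 * (f x y z t) ^ 2 * py f x y z t) y := by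
      simpa using hf.hdY.fun_pow 3
    exact ((hn.div hd (pow_ne_zero 3 (hne x y z t))).const_mul 4)
  have h := ((h1.fun_sub h2).fun_add h3).deriv
  show deriv (fun s => 2 * (px (px (px f)) x s z t / f x s z t)
      - 6 * (px f x s z t * px (px f) x s z t / f x s z t ^ 2)
      + 4 * (px f x s z t ^ 3 / f x s z t ^ 3)) y = _
  rw [h, c1, c2, c3]
  have := hne x y z t
  field_simp
  ring

end GoalSide

end BKP

/-- If a positive smooth `f` satisfies the bilinear equation
`(D_y D_t - D_x^3 D_y + 3 D_x D_z) f·f = 0`, then `u = 2 (ln f)_x` solves the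
(3+1)-dimensional generalized BKP equation `u_{ty} - u_{xxxy} - 3(u_x u_y)_x + 3 u_{xz} = 0`. -/
theorem bkp_of_bilinear (f : ℝ → ℝ → ℝ → ℝ → ℝ)
    (hpos : ∀ x y z t, 0 < f x y z t)
    (hsmooth : ContDiff ℝ (⊤ : ℕ∞) (fun p : ℝ × ℝ × ℝ × ℝ => f p.1 p.2.1 p.2.2.1 p.2.2.2))
    (hbil : ∀ x y z t : ℝ,
      hirota 0 1 0 1 f f x y z t - hirota 3 1 0 0 f f x y z t
        + 3 * hirota 1 0 1 0 f f x y z t = 0)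
    (u : ℝ → ℝ → ℝ → ℝ → ℝ)
    (hu : u = fun x y z t => 2 * deriv (fun s => Real.log (f s y z t)) x) :
    ∀ x y z t : ℝ,
      py (pt u) x y z t - py (px (px (px u))) x y z t
        - 3 * px (fun x y z t => px u x y z t * py u x y z t) x y z t
        + 3 * pz (px u) x y z t = 0 := by
  open BKP in
  intro x y z t
  have hf : Nice f := hsmooth
  have hne : ∀ x y z t, f x y z t ≠ 0 := fun x y z t => ne_of_gt (hpos x y z t)
  set Λ : F4 := fun x y z t => 2 * Real.log (f x y z t) with hΛ
  have ΛN : Nice Λ :=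
    ContDiff.mul contDiff_const (ContDiff.log hf (fun p => hne p.1 p.2.1 p.2.2.1 p.2.2.2))
  have hu2 : u = fun x y z t => 2 * (px f x y z t / f x y z t) := hu.trans (uFormula hf hne)
  have huΛ : u = px Λ := hu2.trans (uIsPxLam hf hne)
  have Nu : Nice u := huΛ ▸ ΛN.px
  have E1 : py (pt u) = px (py (pt Λ)) := by
    rw [huΛ, ← comm_xt ΛN, ← comm_xy ΛN.pt]
  have E2 : py (px (px (px u))) = px (py (px (px u))) := (comm_xy (Nu.px.px)).symm
  have E3 : pz (px u) = px (pz u) := (comm_xz Nu).symm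
  rw [E1, E2, E3]
  have NG1 : Nice (py (pt Λ)) := ΛN.pt.py
  have NA3 : Nice (py (px (px u))) := Nu.px.px.py
  have NC : Nice (fun x y z t => px u x y z t * py u x y z t) := Nice.mul Nu.px Nu.py
  have ND : Nice (pz u) := Nu.pz
  have HD : HasDerivAt
      (fun s => py (pt Λ) s y z t - py (px (px u)) s y z t
        - 3 * (px u s y z t * py u s y z t) + 3 * pz u s y z t)
      (px (py (pt Λ)) x y z t - px (py (px (px u))) x y z t
        - 3 * px (fun x y z t => px u x y z t * py u x y z t) x y z t
        + 3 * px (pz u) x y z t) x :=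
    ((NG1.hdX.sub NA3.hdX).sub (NC.hdX.const_mul 3)).add (ND.hdX.const_mul 3)
  have hpx : px (fun a b c d => py (pt Λ) a b c d - py (px (px u)) a b c d
      - 3 * (px u a b c d * py u a b c d) + 3 * pz u a b c d) x y z t
      = px (py (pt Λ)) x y z t - px (py (px (px u))) x y z t
        - 3 * px (fun x y z t => px u x y z t * py u x y z t) x y z t
        + 3 * px (pz u) x y z t := HD.deriv
  rw [← hpx]
  have keyW : (fun a b c d => py (pt Λ) a b c d - py (px (px u)) a b c d
      - 3 * (px u a b c d * py u a b c d) + 3 * pz u a b c d)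
      = fun (_ _ _ _ : ℝ) => (0:ℝ) := by
    funext a b c d
    have hb := hbil a b c d
    rw [hir1 hf, hir2 hf, hir3 hf] at hb
    rw [hΛ, pyptLam hf hne, hu2, pypxpxU hf hne, pxU hf hne, pyU hf hne, pzU hf hne]
    have h0 := hne a b c d
    field_simp
    linear_combination (f a b c d) ^ 2 * hb
  rw [keyW]
  simp [px]
end

section
/- Let η = μx + νy + κz + ϖt + γ with ν ≠ 0 and ϖ = −3μκ/ν + μ³. Then u = 2∂_x(ln(1 + e^{η})) is a solution of the (3+1)-dimensional generalized BKP equation u_{ty} − u_{xxxy} − 3(u_x u_y)_x + 3u_{xz} = 0. -/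
/-!
A function of the phase `η` alone has each of `∂_x, ∂_y, ∂_z, ∂_t` acting as `μ, ν, κ, ϖ`
times `d/dη`. Since `2 ∂_x ln(1 + e^η) = 2μ σ(η)` with `σ` the logistic sigmoid, the BKP
expression of `u` becomes `(νϖ + 3μκ) F'' - νμ³ F'''' - 6μ²ν F' F''` for `F = 2μσ`. The
dispersion relation turns `νϖ + 3μκ` into `νμ³`, leaving `2μ⁴ν (σ'' - σ'''' - 12 σ' σ'')`.
This vanishes because `σ' = σ - σ²` makes every derivative of `σ` a polynomial in `σ`, and
the identity can then be checked on polynomials.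
-/

open Real Polynomial

noncomputable def bkp (u : ℝ → ℝ → ℝ → ℝ → ℝ) : ℝ → ℝ → ℝ → ℝ → ℝ := fun x y z t =>
  py (pt u) x y z t - py (px (px (px u))) x y z t
    - 3 * px (fun x y z t => px u x y z t * py u x y z t) x y z t + 3 * pz (px u) x y z t

def planeWave (μ ν κ ϖ γ : ℝ) (F : ℝ → ℝ) : ℝ → ℝ → ℝ → ℝ → ℝ :=
  fun x y z t => F (μ * x + ν * y + κ * z + ϖ * t + γ)

section PlaneWave

variable (μ ν κ ϖ γ : ℝ) {F : ℝ → ℝ}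

theorem px_planeWave (hF : Differentiable ℝ F) :
    px (planeWave μ ν κ ϖ γ F) = planeWave μ ν κ ϖ γ (fun h => μ * deriv F h) := by
  funext x y z t
  have hη :=
    (((hasDerivAt_const_mul (x := x) μ).add_const (ν * y)).add_const (κ * z)).add_const (ϖ * t)
  exact ((hF _).hasDerivAt.comp x (hη.add_const γ)).deriv.trans (mul_comm _ _)

theorem py_planeWave (hF : Differentiable ℝ F) :
    py (planeWave μ ν κ ϖ γ F) = planeWave μ ν κ ϖ γ (fun h => ν * deriv F h) := by
  funext x y z t
  have hη :=
    (((hasDerivAt_const_mul (x := y) ν).const_add (μ * x)).add_const (κ * z)).add_const (ϖ * t)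
  exact ((hF _).hasDerivAt.comp y (hη.add_const γ)).deriv.trans (mul_comm _ _)

theorem pz_planeWave (hF : Differentiable ℝ F) :
    pz (planeWave μ ν κ ϖ γ F) = planeWave μ ν κ ϖ γ (fun h => κ * deriv F h) := by
  funext x y z t
  have hη := ((hasDerivAt_const_mul (x := z) κ).const_add (μ * x + ν * y)).add_const (ϖ * t)
  exact ((hF _).hasDerivAt.comp z (hη.add_const γ)).deriv.trans (mul_comm _ _)

theorem pt_planeWave (hF : Differentiable ℝ F) :
    pt (planeWave μ ν κ ϖ γ F) = planeWave μ ν κ ϖ γ (fun h => ϖ * deriv F h) := by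
  funext x y z t
  have hη := (hasDerivAt_const_mul (x := t) ϖ).const_add (μ * x + ν * y + κ * z)
  exact ((hF _).hasDerivAt.comp t (hη.add_const γ)).deriv.trans (mul_comm _ _)

theorem planeWave_mul (F G : ℝ → ℝ) :
    (fun x y z t => planeWave μ ν κ ϖ γ F x y z t * planeWave μ ν κ ϖ γ G x y z t) =
      planeWave μ ν κ ϖ γ (fun h => F h * G h) := rfl

theorem bkp_planeWave (hF : ContDiff ℝ 4 F) :
    bkp (planeWave μ ν κ ϖ γ F) = planeWave μ ν κ ϖ γ (fun h =>
      (ν * ϖ + 3 * μ * κ) * iteratedDeriv 2 F h - ν * μ ^ 3 * iteratedDeriv 4 F h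
        - 6 * μ ^ 2 * ν * iteratedDeriv 1 F h * iteratedDeriv 2 F h) := by
  have hd (m : ℕ) (hm : m < 4) : Differentiable ℝ (iteratedDeriv m F) :=
    hF.differentiable_iteratedDeriv m (mod_cast hm)
  have h0 := hd 0 (by norm_num)
  have h1 := hd 1 (by norm_num)
  have h2 := hd 2 (by norm_num)
  have h3 := hd 3 (by norm_num)
  simp only [iteratedDeriv_succ, iteratedDeriv_zero] at h0 h1 h2 h3 ⊢
  funext x y z t
  simp (disch := fun_prop) only [bkp, px_planeWave, py_planeWave, pz_planeWave, pt_planeWave,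
    planeWave_mul, deriv_const_mul_field]
  simp (disch := fun_prop) only [planeWave, deriv_fun_mul, deriv_const]
  ring

end PlaneWave

noncomputable def sigmoidDerivPoly : ℕ → ℝ[X]
  | 0 => X
  | n + 1 => derivative (sigmoidDerivPoly n) * (X - X ^ 2)

theorem iteratedDeriv_sigmoid (n : ℕ) :
    iteratedDeriv n sigmoid = fun x => (sigmoidDerivPoly n).eval (sigmoid x) := by
  induction n with
  | zero => funext x; simp [sigmoidDerivPoly]
  | succ n ih =>
    funext x
    rw [iteratedDeriv_succ, ih]
    refine ((Polynomial.hasDerivAt _ _).comp x (hasDerivAt_sigmoid x)).deriv.trans ?_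
    simp only [sigmoidDerivPoly, eval_mul, eval_sub, eval_X, eval_pow]
    ring

/-- The derivative of `w - w'' = 6 w²`, the stationary KdV equation solved by `w = σ'`. -/
theorem iteratedDeriv_two_sub_four_sigmoid (x : ℝ) :
    iteratedDeriv 2 sigmoid x - iteratedDeriv 4 sigmoid x =
      12 * iteratedDeriv 1 sigmoid x * iteratedDeriv 2 sigmoid x := by
  simp only [iteratedDeriv_sigmoid]
  simp [sigmoidDerivPoly]
  ring

theorem hasDerivAt_log_one_add_exp (x : ℝ) :
    HasDerivAt (fun h => log (1 + exp h)) (sigmoid x) x := by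
  convert ((hasDerivAt_exp x).const_add 1).log (by positivity) using 1
  rw [sigmoid_def, exp_neg]
  field_simp
  ring

/-- With `η = μx + νy + κz + ϖt + γ`, `ν ≠ 0`, `ϖ = -3μκ/ν + μ³`, the function
`u = 2 ∂_x ln(1 + e^η)` solves `u_{ty} - u_{xxxy} - 3(u_x u_y)_x + 3 u_{xz} = 0`. -/
theorem one_soliton_solves_bkp (μ ν κ γ ϖ : ℝ) (hν : ν ≠ 0)
    (hϖ : ϖ = -3 * μ * κ / ν + μ ^ 3)
    (u : ℝ → ℝ → ℝ → ℝ → ℝ)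
    (hu : u = fun x y z t =>
      2 * deriv (fun s => Real.log (1 + Real.exp (μ * s + ν * y + κ * z + ϖ * t + γ))) x) :
    ∀ x y z t : ℝ,
      py (pt u) x y z t - py (px (px (px u))) x y z t
        - 3 * px (fun x y z t => px u x y z t * py u x y z t) x y z t
        + 3 * pz (px u) x y z t = 0 := by
  have hwave : u = planeWave μ ν κ ϖ γ (fun h => 2 * (μ * sigmoid h)) := by
    have hpx := px_planeWave μ ν κ ϖ γ fun h => (hasDerivAt_log_one_add_exp h).differentiableAt
    simp only [fun h => (hasDerivAt_log_one_add_exp h).deriv] at hpx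
    rw [hu]
    funext x y z t
    change 2 * px (planeWave μ ν κ ϖ γ fun h => log (1 + exp h)) x y z t = _
    rw [hpx]
    rfl
  have hdisp : ν * ϖ + 3 * μ * κ = ν * μ ^ 3 := by rw [hϖ]; field_simp; ring
  have hprofile : ContDiff ℝ 4 fun h => 2 * (μ * sigmoid h) :=
    contDiff_const.mul (contDiff_const.mul (contDiff_sigmoid.of_le le_top))
  intro x y z t
  change bkp u x y z t = 0
  rw [hwave, bkp_planeWave _ _ _ _ _ hprofile]
  simp only [planeWave, iteratedDeriv_const_mul_field]
  generalize μ * x + ν * y + κ * z + ϖ * t + γ = η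
  linear_combination (2 * μ ^ 4 * ν) * iteratedDeriv_two_sub_four_sigmoid η
    + (2 * μ * iteratedDeriv 2 sigmoid η) * hdisp
end

section
/- With Ĥ(m') as in the bilinear Fourier expansion of an even polynomial H acting on the one-dimensional theta function, the recursion Ĥ(m') = Ĥ(m'−2) e^{2πi(m'−1)τ} holds for all m' ∈ ℤ. Consequently, if Ĥ(0) = 0 and Ĥ(1) = 0, then Ĥ(m') = 0 for all m' ∈ ℤ. -/
open Complex

/-- `Ĥ(m') = Σ_{n∈ℤ} H(2πi(2n-m')α, 2πi(2n-m')ρ, 2πi(2n-m')k, 2πi(2n-m')ω) e^{πiτ(n²+(n-m')²)}`. -/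
noncomputable def Hhat (H : MvPolynomial (Fin 4) ℂ) (τ α ρ k ω : ℂ) (m' : ℤ) : ℂ :=
  ∑' n : ℤ, MvPolynomial.eval
      ![2 * Real.pi * Complex.I * (2 * n - m') * α,
        2 * Real.pi * Complex.I * (2 * n - m') * ρ,
        2 * Real.pi * Complex.I * (2 * n - m') * k,
        2 * Real.pi * Complex.I * (2 * n - m') * ω] H *
    Complex.exp (Real.pi * Complex.I * τ * ((n : ℂ) ^ 2 + ((n : ℂ) - m') ^ 2))

/-- The recursion `Ĥ(m') = Ĥ(m'-2) e^{2πi(m'-1)τ}`; consequently, `Ĥ(0) = Ĥ(1) = 0` forces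
`Ĥ(m') = 0` for all `m' ∈ ℤ`. -/
theorem Hhat_recursion (H : MvPolynomial (Fin 4) ℂ)
    (heven : ∀ v : Fin 4 → ℂ, MvPolynomial.eval (fun i => -v i) H = MvPolynomial.eval v H)
    (τ α ρ k ω : ℂ) (hτ : 0 < τ.im) :
    (∀ m' : ℤ, Hhat H τ α ρ k ω m'
      = Hhat H τ α ρ k ω (m' - 2) * Complex.exp (2 * Real.pi * Complex.I * ((m' : ℂ) - 1) * τ)) ∧
    (Hhat H τ α ρ k ω 0 = 0 → Hhat H τ α ρ k ω 1 = 0 → ∀ m' : ℤ, Hhat H τ α ρ k ω m' = 0) := by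
  have hrec : ∀ m' : ℤ, Hhat H τ α ρ k ω m'
      = Hhat H τ α ρ k ω (m' - 2) * Complex.exp (2 * Real.pi * Complex.I * ((m' : ℂ) - 1) * τ) := by
    intro m'
    set c := Complex.exp (2 * Real.pi * Complex.I * ((m' : ℂ) - 1) * τ) with hc
    unfold Hhat
    set g : ℤ → ℂ := fun n => MvPolynomial.eval
      ![2 * Real.pi * Complex.I * (2 * n - ((m' - 2 : ℤ) : ℂ)) * α,
        2 * Real.pi * Complex.I * (2 * n - ((m' - 2 : ℤ) : ℂ)) * ρ,
        2 * Real.pi * Complex.I * (2 * n - ((m' - 2 : ℤ) : ℂ)) * k,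
        2 * Real.pi * Complex.I * (2 * n - ((m' - 2 : ℤ) : ℂ)) * ω] H *
      Complex.exp (Real.pi * Complex.I * τ * ((n : ℂ) ^ 2 + ((n : ℂ) - ((m' - 2 : ℤ) : ℂ)) ^ 2))
      with hg
    calc (∑' n : ℤ, MvPolynomial.eval
        ![2 * Real.pi * Complex.I * (2 * n - (m' : ℂ)) * α,
          2 * Real.pi * Complex.I * (2 * n - (m' : ℂ)) * ρ,
          2 * Real.pi * Complex.I * (2 * n - (m' : ℂ)) * k,
          2 * Real.pi * Complex.I * (2 * n - (m' : ℂ)) * ω] H *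
        Complex.exp (Real.pi * Complex.I * τ * ((n : ℂ) ^ 2 + ((n : ℂ) - (m' : ℂ)) ^ 2)))
        = ∑' n : ℤ, (fun n => g n * c) (Equiv.subRight (1 : ℤ) n) := by
          refine tsum_congr fun n => ?_
          simp only [Equiv.subRight_apply, hg]
          have hv : (![2 * Real.pi * Complex.I * (2 * ((n - 1 : ℤ) : ℂ) - ((m' - 2 : ℤ) : ℂ)) * α,
              2 * Real.pi * Complex.I * (2 * ((n - 1 : ℤ) : ℂ) - ((m' - 2 : ℤ) : ℂ)) * ρ,
              2 * Real.pi * Complex.I * (2 * ((n - 1 : ℤ) : ℂ) - ((m' - 2 : ℤ) : ℂ)) * k,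
              2 * Real.pi * Complex.I * (2 * ((n - 1 : ℤ) : ℂ) - ((m' - 2 : ℤ) : ℂ)) * ω]
              : Fin 4 → ℂ)
              = ![2 * Real.pi * Complex.I * (2 * (n : ℂ) - (m' : ℂ)) * α,
                2 * Real.pi * Complex.I * (2 * (n : ℂ) - (m' : ℂ)) * ρ,
                2 * Real.pi * Complex.I * (2 * (n : ℂ) - (m' : ℂ)) * k,
                2 * Real.pi * Complex.I * (2 * (n : ℂ) - (m' : ℂ)) * ω] := by
            funext i
            fin_cases i <;> · show _ = _; push_cast; ring
          rw [hv]
          conv_rhs => rw [hc, mul_assoc, ← Complex.exp_add]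
          congr 2
          push_cast
          ring
      _ = ∑' n : ℤ, g n * c := Equiv.tsum_eq (Equiv.subRight (1 : ℤ)) (fun n => g n * c)
      _ = (∑' n : ℤ, g n) * c := tsum_mul_right
  refine ⟨hrec, fun h0 h1 m' => ?_⟩
  have hne : ∀ z : ℂ, Complex.exp z ≠ 0 := Complex.exp_ne_zero
  have key : ∀ N : ℕ, ∀ m' : ℤ, m'.natAbs = N → Hhat H τ α ρ k ω m' = 0 := by
    intro N
    induction N using Nat.strong_induction_on with
    | _ N ih =>
      intro m' hm
      match N, hm with
      | 0, hm =>
        have : m' = 0 := Int.natAbs_eq_zero.mp hm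
        simpa [this] using h0
      | 1, hm =>
        rcases Int.natAbs_eq_iff.mp hm with h | h
        · simpa [h] using h1
        · have := hrec 1
          simp only [show ((1 : ℤ) : ℂ) = 1 by norm_num, sub_self, mul_zero, zero_mul,
            Complex.exp_zero, mul_one, show (1 : ℤ) - 2 = -1 by ring] at this
          have h' : m' = -1 := by exact_mod_cast h
          rw [h', ← this]
          exact h1
      | (M + 2), hm =>
        rcases Int.natAbs_eq_iff.mp hm with h | h
        · -- m' = M + 2 ≥ 2
          have h2 : (m' - 2).natAbs = M := by omega
          rw [hrec m', ih M (by omega) _ h2, zero_mul]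
        · -- m' = -(M+2) ≤ -2
          have h2 : (m' + 2).natAbs = M := by omega
          have := hrec (m' + 2)
          rw [show m' + 2 - 2 = m' by ring, ih M (by omega) _ h2] at this
          exact (mul_eq_zero.mp this.symm).resolve_right (hne _)
  exact key m'.natAbs m' rfl
end

section
/- Let ϑ(ξ₁,ξ₂,ξ₃,τ) = Σ_{n∈ℤ³} e^{πi⟨τn,n⟩ + 2πi⟨ξ,n⟩} be the genus-3 theta function with symmetric τ such that −iτ is positive definite. Fix η₁, η₂, η₃ and the off-diagonal entries τ₁₂, τ₁₃, τ₂₃. Under ξⱼ = (ηⱼ − πiτⱼⱼ)/(2πi) and λⱼ = e^{πiτⱼⱼ}, as (λ₁,λ₂,λ₃) → (0,0,0) one has ϑ → 1 + e^{η₁} + e^{η₂} + e^{η₃} + e^{η₁+η₂+2πiτ₁₂} + e^{η₁+η₃+2πiτ₁₃} + e^{η₂+η₃+2πiτ₂₃} + e^{η₁+η₂+η₃+2πi(τ₁₂+τ₁₃+τ₂₃)}. -/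
/-!
With `τⱼⱼ = i bⱼ` and the shifted arguments `ξⱼ`, the `n`-th term of the theta series is
`exp (C n) * ∏ⱼ exp (-π bⱼ nⱼ (nⱼ - 1))`, where `C n` collects the `η`- and off-diagonal
`τ`-terms and does not depend on `b`. Since `k (k - 1) ≥ 0` for integers, with equality exactly
for `k ∈ {0, 1}`, each term tends to `exp (C n)` on `{0, 1}³` and to `0` elsewhere. As `Re (C n)`
grows at most quadratically in `n` while `k (k - 1) ≥ (k² - 1) / 2`, for large `bⱼ` all terms are
dominated by a multiple of `exp (-|n|²)`, and dominated convergence for series gives the limit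
`∑_{n ∈ {0,1}³} exp (C n)`.
-/

open Complex Filter Real Topology

/-- `λ ^ (k (k - 1))` for `λ = exp (-π t)`, i.e. the paper's `λⱼ = exp (π i τⱼⱼ)` at `τⱼⱼ = i t`. -/
noncomputable def solitonWeight (t : ℝ) (k : ℤ) : ℝ :=
  rexp (-(π * t * (k * (k - 1))))

noncomputable def solitonPhase (η₁ η₂ η₃ τ₁₂ τ₁₃ τ₂₃ : ℂ) (n : ℤ × ℤ × ℤ) : ℂ :=
  η₁ * n.1 + η₂ * n.2.1 + η₃ * n.2.2
    + 2 * π * I * τ₁₂ * (n.1 * n.2.1 : ℤ)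
    + 2 * π * I * τ₁₃ * (n.1 * n.2.2 : ℤ)
    + 2 * π * I * τ₂₃ * (n.2.1 * n.2.2 : ℤ)

lemma intCast_mul_sub_one_nonneg (k : ℤ) : 0 ≤ (k : ℝ) * (k - 1) := by
  have : 0 ≤ k * (k - 1) := by rcases le_or_gt k 0 with h | h <;> nlinarith
  exact_mod_cast this

lemma one_le_intCast_mul_sub_one {k : ℤ} (hk : k ∉ ({0, 1} : Set ℤ)) :
    1 ≤ (k : ℝ) * (k - 1) := by
  have : k ≤ -1 ∨ 2 ≤ k := by
    simp only [Set.mem_insert_iff, Set.mem_singleton_iff] at hk; omega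
  have : 1 ≤ k * (k - 1) := by rcases this with h | h <;> nlinarith
  exact_mod_cast this

lemma solitonWeight_nonneg (t : ℝ) (k : ℤ) : 0 ≤ solitonWeight t k :=
  (Real.exp_pos _).le

lemma tendsto_solitonWeight (k : ℤ) :
    Tendsto (solitonWeight · k) atTop (𝓝 (({0, 1} : Set ℤ).indicator 1 k)) := by
  by_cases hk : k ∈ ({0, 1} : Set ℤ)
  · have hq : (k : ℝ) * (k - 1) = 0 := by rcases hk with rfl | rfl <;> norm_num
    simp [solitonWeight, hq, Set.indicator_of_mem hk]
  · rw [Set.indicator_of_notMem hk]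
    have hq := one_le_intCast_mul_sub_one hk
    have : Tendsto (fun t : ℝ => t * -(π * (k * (k - 1)))) atTop atBot :=
      tendsto_id.atTop_mul_const_of_neg (by nlinarith [pi_pos])
    exact Real.tendsto_exp_atBot.comp (this.congr fun t => by ring)

lemma exp_mul_sq_mul_solitonWeight_le {K t : ℝ} (hK : 0 ≤ K) (ht : 2 * (K + 1) ≤ π * t)
    (k : ℤ) : rexp (K * k ^ 2) * solitonWeight t k ≤ rexp (K + 1 - k ^ 2) := by
  have hq := intCast_mul_sub_one_nonneg k
  rw [solitonWeight, ← Real.exp_add, Real.exp_le_exp]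
  nlinarith [mul_le_mul_of_nonneg_right ht hq,
    mul_nonneg (by linarith : 0 ≤ K + 1) (sq_nonneg ((k : ℝ) - 1))]

lemma summable_exp_neg_intCast_sq : Summable fun k : ℤ => rexp (-(k : ℝ) ^ 2) := by
  refine ((summable_jacobiTheta₂_term_iff 0 (I / π)).mpr (by simp [pi_pos])).norm.congr
    fun k => ?_
  rw [norm_jacobiTheta₂_term, div_ofReal_im, I_im, zero_im]
  congr 1
  field_simp
  ring

section DominatedConvergence

variable {K : ℝ}

lemma tendsto_mul_solitonWeight (c : ℂ) (n : ℤ × ℤ × ℤ) :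
    Tendsto (fun b : ℝ × ℝ × ℝ => c *
        (solitonWeight b.1 n.1 * (solitonWeight b.2.1 n.2.1 * solitonWeight b.2.2 n.2.2) : ℝ))
      (atTop ×ˢ (atTop ×ˢ atTop))
      (𝓝 (c * ((({0, 1} : Set ℤ) ×ˢ ({0, 1} : Set ℤ) ×ˢ ({0, 1} : Set ℤ)).indicator 1 n : ℝ))) := by
  rw [Set.indicator_prod_one, Set.indicator_prod_one]
  have h₁ : Tendsto (fun b : ℝ × ℝ × ℝ => solitonWeight b.1 n.1) (atTop ×ˢ (atTop ×ˢ atTop)) _ :=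
    (tendsto_solitonWeight n.1).comp tendsto_fst
  have h₂ : Tendsto (fun b : ℝ × ℝ × ℝ => solitonWeight b.2.1 n.2.1)
      (atTop ×ˢ (atTop ×ˢ atTop)) _ :=
    (tendsto_solitonWeight n.2.1).comp (tendsto_fst.comp tendsto_snd)
  have h₃ : Tendsto (fun b : ℝ × ℝ × ℝ => solitonWeight b.2.2 n.2.2)
      (atTop ×ˢ (atTop ×ˢ atTop)) _ :=
    (tendsto_solitonWeight n.2.2).comp (tendsto_snd.comp tendsto_snd)
  exact tendsto_const_nhds.mul ((continuous_ofReal.tendsto _).comp (h₁.mul (h₂.mul h₃)))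

lemma norm_exp_mul_solitonWeight_le {c : ℂ} {b : ℝ × ℝ × ℝ} {n : ℤ × ℤ × ℤ} (hK : 0 ≤ K)
    (hc : c.re ≤ K * ((n.1 : ℝ) ^ 2 + (n.2.1 : ℝ) ^ 2 + (n.2.2 : ℝ) ^ 2))
    (hb₁ : 2 * (K + 1) ≤ π * b.1) (hb₂ : 2 * (K + 1) ≤ π * b.2.1)
    (hb₃ : 2 * (K + 1) ≤ π * b.2.2) :
    ‖cexp c *
        (solitonWeight b.1 n.1 * (solitonWeight b.2.1 n.2.1 * solitonWeight b.2.2 n.2.2) : ℝ)‖ ≤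
      rexp (K + 1 - n.1 ^ 2) * (rexp (K + 1 - n.2.1 ^ 2) * rexp (K + 1 - n.2.2 ^ 2)) := by
  set w₁ := solitonWeight b.1 n.1
  set w₂ := solitonWeight b.2.1 n.2.1
  set w₃ := solitonWeight b.2.2 n.2.2
  have hw : 0 ≤ w₁ * (w₂ * w₃) :=
    mul_nonneg (solitonWeight_nonneg _ _)
      (mul_nonneg (solitonWeight_nonneg _ _) (solitonWeight_nonneg _ _))
  have hew (t : ℝ) (k : ℤ) : 0 ≤ rexp (K * k ^ 2) * solitonWeight t k :=
    mul_nonneg (Real.exp_pos _).le (solitonWeight_nonneg t k)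
  calc ‖cexp c * ↑(w₁ * (w₂ * w₃))‖ = rexp c.re * (w₁ * (w₂ * w₃)) := by
        rw [norm_mul, norm_exp, norm_real, Real.norm_of_nonneg hw]
    _ ≤ rexp (K * ((n.1 : ℝ) ^ 2 + (n.2.1 : ℝ) ^ 2 + (n.2.2 : ℝ) ^ 2)) * (w₁ * (w₂ * w₃)) :=
        mul_le_mul_of_nonneg_right (Real.exp_le_exp.2 hc) hw
    _ = rexp (K * n.1 ^ 2) * w₁ *
          (rexp (K * n.2.1 ^ 2) * w₂ * (rexp (K * n.2.2 ^ 2) * w₃)) := by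
        rw [mul_add, mul_add, Real.exp_add, Real.exp_add]; ring
    _ ≤ _ :=
        mul_le_mul (exp_mul_sq_mul_solitonWeight_le hK hb₁ _)
          (mul_le_mul (exp_mul_sq_mul_solitonWeight_le hK hb₂ _)
            (exp_mul_sq_mul_solitonWeight_le hK hb₃ _) (hew _ _) (Real.exp_pos _).le)
          (mul_nonneg (hew _ _) (hew _ _)) (Real.exp_pos _).le

lemma tendsto_tsum_exp_mul_solitonWeight (C : ℤ × ℤ × ℤ → ℂ) (hK : 0 ≤ K)
    (hC : ∀ n : ℤ × ℤ × ℤ, (C n).re ≤ K * ((n.1 : ℝ) ^ 2 + (n.2.1 : ℝ) ^ 2 + (n.2.2 : ℝ) ^ 2)) :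
    Tendsto (fun b : ℝ × ℝ × ℝ => ∑' n : ℤ × ℤ × ℤ, cexp (C n) *
        (solitonWeight b.1 n.1 * (solitonWeight b.2.1 n.2.1 * solitonWeight b.2.2 n.2.2) : ℝ))
      (atTop ×ˢ (atTop ×ˢ atTop))
      (𝓝 (∑ n ∈ ({0, 1} : Finset ℤ) ×ˢ ({0, 1} : Finset ℤ) ×ˢ ({0, 1} : Finset ℤ),
        cexp (C n))) := by
  have hg : Summable fun k : ℤ => rexp (K + 1 - k ^ 2) := by
    simpa [sub_eq_add_neg, Real.exp_add] using
      summable_exp_neg_intCast_sq.mul_left (rexp (K + 1))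
  have hg0 : 0 ≤ fun k : ℤ => rexp (K + 1 - k ^ 2) := fun _ => (Real.exp_pos _).le
  have hb : ∀ᶠ t in atTop, 2 * (K + 1) ≤ π * t :=
    (tendsto_id.const_mul_atTop pi_pos).eventually_ge_atTop _
  rw [sum_eq_tsum_indicator]
  refine tendsto_tsum_of_dominated_convergence
    (hg.mul_of_nonneg (hg.mul_of_nonneg hg hg0 hg0) hg0 fun _ => mul_nonneg (hg0 _) (hg0 _))
    (fun n => ?_) ?_
  · convert tendsto_mul_solitonWeight (cexp (C n)) n using 2
    simp only [Finset.coe_product, Finset.coe_pair, Set.indicator_apply]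
    split_ifs <;> simp
  · filter_upwards [prod_mem_prod hb (prod_mem_prod hb hb)] with b ⟨hb₁, hb₂, hb₃⟩ n
    exact norm_exp_mul_solitonWeight_le hK (hC n) hb₁ hb₂ hb₃

end DominatedConvergence

lemma re_mul_intCast_le (c : ℂ) {m : ℤ} {N : ℝ} (h : |(m : ℝ)| ≤ N) : (c * m).re ≤ ‖c‖ * N :=
  (re_le_norm _).trans (by rw [norm_mul, norm_intCast]; gcongr)

lemma abs_intCast_le_sq (k : ℤ) : |(k : ℝ)| ≤ (k : ℝ) ^ 2 := by
  have : |k| ≤ k ^ 2 := Int.natCast_natAbs k ▸ Int.natAbs_le_self_sq k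
  exact_mod_cast this

lemma abs_intCast_mul_le (j k : ℤ) : |((j * k : ℤ) : ℝ)| ≤ (j : ℝ) ^ 2 + (k : ℝ) ^ 2 := by
  rw [Int.cast_mul, abs_mul, ← sq_abs (j : ℝ), ← sq_abs (k : ℝ)]
  nlinarith [two_mul_le_add_sq |(j : ℝ)| |(k : ℝ)|, abs_nonneg (j : ℝ), abs_nonneg (k : ℝ)]

lemma solitonPhase_re_le (η₁ η₂ η₃ τ₁₂ τ₁₃ τ₂₃ : ℂ) (n : ℤ × ℤ × ℤ) :
    (solitonPhase η₁ η₂ η₃ τ₁₂ τ₁₃ τ₂₃ n).re ≤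
      (‖η₁‖ + ‖η₂‖ + ‖η₃‖ + ‖2 * π * I * τ₁₂‖ + ‖2 * π * I * τ₁₃‖ + ‖2 * π * I * τ₂₃‖) *
        ((n.1 : ℝ) ^ 2 + (n.2.1 : ℝ) ^ 2 + (n.2.2 : ℝ) ^ 2) := by
  obtain ⟨n₁, n₂, n₃⟩ := n
  set N : ℝ := (n₁ : ℝ) ^ 2 + (n₂ : ℝ) ^ 2 + (n₃ : ℝ) ^ 2
  have h₁ := sq_nonneg (n₁ : ℝ)
  have h₂ := sq_nonneg (n₂ : ℝ)
  have h₃ := sq_nonneg (n₃ : ℝ)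
  simp only [solitonPhase, add_re]
  linarith [re_mul_intCast_le η₁ (m := n₁) (N := N) (by linarith [abs_intCast_le_sq n₁]),
    re_mul_intCast_le η₂ (m := n₂) (N := N) (by linarith [abs_intCast_le_sq n₂]),
    re_mul_intCast_le η₃ (m := n₃) (N := N) (by linarith [abs_intCast_le_sq n₃]),
    re_mul_intCast_le (2 * π * I * τ₁₂) (m := n₁ * n₂) (N := N)
      (by linarith [abs_intCast_mul_le n₁ n₂]),
    re_mul_intCast_le (2 * π * I * τ₁₃) (m := n₁ * n₃) (N := N)
      (by linarith [abs_intCast_mul_le n₁ n₃]),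
    re_mul_intCast_le (2 * π * I * τ₂₃) (m := n₂ * n₃) (N := N)
      (by linarith [abs_intCast_mul_le n₂ n₃])]

lemma sum_exp_solitonPhase (η₁ η₂ η₃ τ₁₂ τ₁₃ τ₂₃ : ℂ) :
    ∑ n ∈ ({0, 1} : Finset ℤ) ×ˢ ({0, 1} : Finset ℤ) ×ˢ ({0, 1} : Finset ℤ),
        cexp (solitonPhase η₁ η₂ η₃ τ₁₂ τ₁₃ τ₂₃ n) =
      1 + cexp η₁ + cexp η₂ + cexp η₃
        + cexp (η₁ + η₂ + 2 * π * I * τ₁₂)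
        + cexp (η₁ + η₃ + 2 * π * I * τ₁₃)
        + cexp (η₂ + η₃ + 2 * π * I * τ₂₃)
        + cexp (η₁ + η₂ + η₃ + 2 * π * I * (τ₁₂ + τ₁₃ + τ₂₃)) := by
  simp only [solitonPhase, Finset.sum_product, Finset.sum_insert, Finset.sum_singleton,
    Finset.mem_singleton, zero_ne_one, not_false_eq_true, Int.cast_mul, Int.cast_zero,
    Int.cast_one, mul_zero, mul_one, add_zero, zero_add, Complex.exp_zero]
  ring_nf

lemma theta3_term_eq_exp_solitonPhase_mul (η₁ η₂ η₃ τ₁₂ τ₁₃ τ₂₃ : ℂ) (b : ℝ × ℝ × ℝ)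
    (n : ℤ × ℤ × ℤ) :
    Complex.exp (Real.pi * Complex.I *
        ((Complex.I * b.1) * (n.1 : ℂ) ^ 2
          + (Complex.I * b.2.1) * (n.2.1 : ℂ) ^ 2
          + (Complex.I * b.2.2) * (n.2.2 : ℂ) ^ 2
          + 2 * τ₁₂ * (n.1 : ℂ) * (n.2.1 : ℂ)
          + 2 * τ₁₃ * (n.1 : ℂ) * (n.2.2 : ℂ)
          + 2 * τ₂₃ * (n.2.1 : ℂ) * (n.2.2 : ℂ))
      + 2 * Real.pi * Complex.I *
        (((η₁ - Real.pi * Complex.I * (Complex.I * b.1)) /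
            (2 * Real.pi * Complex.I)) * (n.1 : ℂ)
          + ((η₂ - Real.pi * Complex.I * (Complex.I * b.2.1)) /
            (2 * Real.pi * Complex.I)) * (n.2.1 : ℂ)
          + ((η₃ - Real.pi * Complex.I * (Complex.I * b.2.2)) /
            (2 * Real.pi * Complex.I)) * (n.2.2 : ℂ))) =
      cexp (solitonPhase η₁ η₂ η₃ τ₁₂ τ₁₃ τ₂₃ n) *
        (solitonWeight b.1 n.1 * (solitonWeight b.2.1 n.2.1 * solitonWeight b.2.2 n.2.2) : ℝ) := by
  simp only [solitonPhase, solitonWeight, ofReal_mul, ofReal_exp, ← Complex.exp_add]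
  congr 1
  have : (π : ℂ) ≠ 0 := ofReal_ne_zero.mpr pi_ne_zero
  push_cast
  field_simp
  ring_nf
  simp only [I_sq]
  ring

/-- Genus-3 soliton limit: with `τⱼⱼ = i bⱼ`, `ξⱼ = (ηⱼ - πiτⱼⱼ)/(2πi)` and fixed
`η₁, η₂, η₃, τ₁₂, τ₁₃, τ₂₃`, the genus-3 theta function tends to
`1 + e^{η₁} + e^{η₂} + e^{η₃} + e^{η₁+η₂+2πiτ₁₂} + e^{η₁+η₃+2πiτ₁₃} + e^{η₂+η₃+2πiτ₂₃}
+ e^{η₁+η₂+η₃+2πi(τ₁₂+τ₁₃+τ₂₃)}` as `b₁, b₂, b₃ → +∞` (i.e. `λ₁, λ₂, λ₃ → 0`). -/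
theorem theta3_soliton_limit (η₁ η₂ η₃ τ₁₂ τ₁₃ τ₂₃ : ℂ) :
    Tendsto (fun b : ℝ × ℝ × ℝ =>
        ∑' n : ℤ × ℤ × ℤ,
          Complex.exp (Real.pi * Complex.I *
              ((Complex.I * b.1) * (n.1 : ℂ) ^ 2
                + (Complex.I * b.2.1) * (n.2.1 : ℂ) ^ 2
                + (Complex.I * b.2.2) * (n.2.2 : ℂ) ^ 2
                + 2 * τ₁₂ * (n.1 : ℂ) * (n.2.1 : ℂ)
                + 2 * τ₁₃ * (n.1 : ℂ) * (n.2.2 : ℂ)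
                + 2 * τ₂₃ * (n.2.1 : ℂ) * (n.2.2 : ℂ))
            + 2 * Real.pi * Complex.I *
              (((η₁ - Real.pi * Complex.I * (Complex.I * b.1)) /
                  (2 * Real.pi * Complex.I)) * (n.1 : ℂ)
                + ((η₂ - Real.pi * Complex.I * (Complex.I * b.2.1)) /
                  (2 * Real.pi * Complex.I)) * (n.2.1 : ℂ)
                + ((η₃ - Real.pi * Complex.I * (Complex.I * b.2.2)) /
                  (2 * Real.pi * Complex.I)) * (n.2.2 : ℂ))))
      (atTop ×ˢ (atTop ×ˢ atTop))
      (nhds (1 + Complex.exp η₁ + Complex.exp η₂ + Complex.exp η₃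
        + Complex.exp (η₁ + η₂ + 2 * Real.pi * Complex.I * τ₁₂)
        + Complex.exp (η₁ + η₃ + 2 * Real.pi * Complex.I * τ₁₃)
        + Complex.exp (η₂ + η₃ + 2 * Real.pi * Complex.I * τ₂₃)
        + Complex.exp (η₁ + η₂ + η₃
            + 2 * Real.pi * Complex.I * (τ₁₂ + τ₁₃ + τ₂₃)))) := by
  have hlim := tendsto_tsum_exp_mul_solitonWeight _ (by positivity)
    (solitonPhase_re_le η₁ η₂ η₃ τ₁₂ τ₁₃ τ₂₃)
  rw [sum_exp_solitonPhase] at hlim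
  exact hlim.congr fun b => tsum_congr fun n =>
    (theta3_term_eq_exp_solitonPhase_mul η₁ η₂ η₃ τ₁₂ τ₁₃ τ₂₃ b n).symm
end
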